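/- There are exactly 48 maximal non-chromatic scales with exactly 7 elements, and every maximal non-chromatic scale with 7 elements is a translate of the major scale {0,2,4,5,7,9,11}, the melodic minor scale {0,2,3,5,7,9,11}, the harmonic minor scale {0,2,3,5,7,8,11}, or the harmonic major scale {0,2,4,5,7,8,11}. -/
import Mathlib

set_option maxRecDepth 100000
set_option maxHeartbeats 16000000

/-- A scale is a finite subset of the twelve pitch classes `ZMod 12`.
It is non-chromatic if it contains no three consecutive pitch classes. -/
def NonChromatic (S : Finset (ZMod 12)) : Prop :=
  ∀ t : ZMod 12, ¬(t ∈ S ∧ t + 1 ∈ S ∧ t + 2 ∈ S)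

instance : DecidablePred NonChromatic := fun S => by
  unfold NonChromatic; infer_instance

/-- A non-chromatic scale is maximal if every scale strictly containing it
fails to be non-chromatic. -/
def MaximalNC (S : Finset (ZMod 12)) : Prop :=
  NonChromatic S ∧ ∀ T : Finset (ZMod 12), S ⊂ T → ¬ NonChromatic T

instance : DecidablePred MaximalNC := fun S => by
  unfold MaximalNC; infer_instance

/-- The translateScale `t + S` of a scale. -/
def translateScale (t : ZMod 12) (S : Finset (ZMod 12)) : Finset (ZMod 12) :=
  S.image (fun x => t + x)

def MaximalNC' (S : Finset (ZMod 12)) : Prop :=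
  NonChromatic S ∧ ∀ x : ZMod 12, x ∉ S → ¬ NonChromatic (insert x S)

instance : DecidablePred MaximalNC' := fun S => by
  unfold MaximalNC'; infer_instance

lemma nc_anti {S T : Finset (ZMod 12)} (h : S ⊆ T) (hT : NonChromatic T) :
    NonChromatic S := fun t ht =>
  hT t ⟨h ht.1, h ht.2.1, h ht.2.2⟩

lemma maximalNC_iff (S : Finset (ZMod 12)) : MaximalNC S ↔ MaximalNC' S := by
  constructor
  · rintro ⟨h1, h2⟩
    exact ⟨h1, fun x hx => h2 _ (Finset.ssubset_insert hx)⟩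
  · rintro ⟨h1, h2⟩
    refine ⟨h1, fun T hT hTnc => ?_⟩
    obtain ⟨x, hxT, hxS⟩ := Finset.exists_of_ssubset hT
    exact h2 x hxS (nc_anti (Finset.insert_subset hxT hT.1) hTnc)

def L48 : Finset (Finset (ZMod 12)) :=
  {{2,3,5,7,8,10,11},
  {2,3,5,6,8,10,11},
  {1,3,5,7,8,10,11},
  {1,3,5,6,8,10,11},
  {1,3,5,6,8,9,11},
  {1,3,4,7,8,10,11},
  {1,3,4,6,8,10,11},
  {1,3,4,6,8,9,11},
  {1,3,4,6,7,10,11},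
  {1,3,4,6,7,9,11},
  {1,2,5,6,8,10,11},
  {1,2,5,6,8,9,11},
  {1,2,4,6,8,10,11},
  {1,2,4,6,8,9,11},
  {1,2,4,6,7,10,11},
  {1,2,4,6,7,9,11},
  {1,2,4,6,7,9,10},
  {1,2,4,5,8,9,11},
  {1,2,4,5,7,9,11},
  {1,2,4,5,7,9,10},
  {0,3,4,6,8,9,11},
  {0,3,4,6,7,9,11},
  {0,2,4,6,8,9,11},
  {0,2,4,6,7,9,11},
  {0,2,4,6,7,9,10},
  {0,2,4,5,8,9,11},
  {0,2,4,5,7,9,11},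
  {0,2,4,5,7,9,10},
  {0,2,4,5,7,8,11},
  {0,2,4,5,7,8,10},
  {0,2,3,6,7,9,11},
  {0,2,3,6,7,9,10},
  {0,2,3,5,7,9,11},
  {0,2,3,5,7,9,10},
  {0,2,3,5,7,8,11},
  {0,2,3,5,7,8,10},
  {0,2,3,5,6,9,10},
  {0,2,3,5,6,8,10},
  {0,1,4,5,7,9,10},
  {0,1,4,5,7,8,10},
  {0,1,3,5,7,9,10},
  {0,1,3,5,7,8,10},
  {0,1,3,5,6,9,10},
  {0,1,3,5,6,8,10},
  {0,1,3,5,6,8,9},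
  {0,1,3,4,7,8,10},
  {0,1,3,4,6,8,10},
  {0,1,3,4,6,8,9}
}

lemma filterEq :
    (((Finset.univ : Finset (ZMod 12)).powersetCard 7).filter MaximalNC') = L48 := by
  decide

lemma cardL48 : L48.card = 48 := by decide

lemma classify48 : ∀ S ∈ L48, ∃ t : ZMod 12,
      S = translateScale t ({0,2,4,5,7,9,11} : Finset (ZMod 12)) ∨
      S = translateScale t ({0,2,3,5,7,9,11} : Finset (ZMod 12)) ∨
      S = translateScale t ({0,2,3,5,7,8,11} : Finset (ZMod 12)) ∨
      S = translateScale t ({0,2,4,5,7,8,11} : Finset (ZMod 12)) := by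
  intro S hS
  simp only [L48, Finset.mem_insert, Finset.mem_singleton] at hS
  rcases hS with rfl|rfl|rfl|rfl|rfl|rfl|rfl|rfl|rfl|rfl|rfl|rfl|rfl|rfl|rfl|rfl|rfl|rfl|rfl|rfl|rfl|rfl|rfl|rfl|rfl|rfl|rfl|rfl|rfl|rfl|rfl|rfl|rfl|rfl|rfl|rfl|rfl|rfl|rfl|rfl|rfl|rfl|rfl|rfl|rfl|rfl|rfl|rfl
  · exact ⟨3, Or.inr (Or.inr (Or.inr (by decide)))⟩
  · exact ⟨3, Or.inr (Or.inr (Or.inl (by decide)))⟩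
  · exact ⟨8, Or.inr (Or.inl (by decide))⟩
  · exact ⟨6, Or.inl (by decide)⟩
  · exact ⟨6, Or.inr (Or.inl (by decide))⟩
  · exact ⟨8, Or.inr (Or.inr (Or.inl (by decide)))⟩
  · exact ⟨11, Or.inl (by decide)⟩
  · exact ⟨4, Or.inl (by decide)⟩
  · exact ⟨11, Or.inr (Or.inr (Or.inr (by decide)))⟩
  · exact ⟨4, Or.inr (Or.inl (by decide))⟩
  · exact ⟨6, Or.inr (Or.inr (Or.inr (by decide)))⟩
  · exact ⟨6, Or.inr (Or.inr (Or.inl (by decide)))⟩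
  · exact ⟨11, Or.inr (Or.inl (by decide))⟩
  · exact ⟨9, Or.inl (by decide)⟩
  · exact ⟨11, Or.inr (Or.inr (Or.inl (by decide)))⟩
  · exact ⟨2, Or.inl (by decide)⟩
  · exact ⟨2, Or.inr (Or.inr (Or.inr (by decide)))⟩
  · exact ⟨9, Or.inr (Or.inr (Or.inr (by decide)))⟩
  · exact ⟨2, Or.inr (Or.inl (by decide))⟩
  · exact ⟨2, Or.inr (Or.inr (Or.inl (by decide)))⟩
  · exact ⟨4, Or.inr (Or.inr (Or.inr (by decide)))⟩
  · exact ⟨4, Or.inr (Or.inr (Or.inl (by decide)))⟩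
  · exact ⟨9, Or.inr (Or.inl (by decide))⟩
  · exact ⟨7, Or.inl (by decide)⟩
  · exact ⟨7, Or.inr (Or.inl (by decide))⟩
  · exact ⟨9, Or.inr (Or.inr (Or.inl (by decide)))⟩
  · exact ⟨0, Or.inl (by decide)⟩
  · exact ⟨5, Or.inl (by decide)⟩
  · exact ⟨0, Or.inr (Or.inr (Or.inr (by decide)))⟩
  · exact ⟨5, Or.inr (Or.inl (by decide))⟩
  · exact ⟨7, Or.inr (Or.inr (Or.inr (by decide)))⟩
  · exact ⟨7, Or.inr (Or.inr (Or.inl (by decide)))⟩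
  · exact ⟨0, Or.inr (Or.inl (by decide))⟩
  · exact ⟨10, Or.inl (by decide)⟩
  · exact ⟨0, Or.inr (Or.inr (Or.inl (by decide)))⟩
  · exact ⟨3, Or.inl (by decide)⟩
  · exact ⟨10, Or.inr (Or.inr (Or.inr (by decide)))⟩
  · exact ⟨3, Or.inr (Or.inl (by decide))⟩
  · exact ⟨5, Or.inr (Or.inr (Or.inr (by decide)))⟩
  · exact ⟨5, Or.inr (Or.inr (Or.inl (by decide)))⟩
  · exact ⟨10, Or.inr (Or.inl (by decide))⟩
  · exact ⟨8, Or.inl (by decide)⟩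
  · exact ⟨10, Or.inr (Or.inr (Or.inl (by decide)))⟩
  · exact ⟨1, Or.inl (by decide)⟩
  · exact ⟨1, Or.inr (Or.inr (Or.inr (by decide)))⟩
  · exact ⟨8, Or.inr (Or.inr (Or.inr (by decide)))⟩
  · exact ⟨1, Or.inr (Or.inl (by decide))⟩
  · exact ⟨1, Or.inr (Or.inr (Or.inl (by decide)))⟩

theorem maximal_nonchromatic_seven_notes :
    (Finset.univ.filter (fun S : Finset (ZMod 12) => MaximalNC S ∧ S.card = 7)).card = 48 ∧
    (∀ S : Finset (ZMod 12), MaximalNC S → S.card = 7 → ∃ t : ZMod 12,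
      S = translateScale t ({0,2,4,5,7,9,11} : Finset (ZMod 12)) ∨
      S = translateScale t ({0,2,3,5,7,9,11} : Finset (ZMod 12)) ∨
      S = translateScale t ({0,2,3,5,7,8,11} : Finset (ZMod 12)) ∨
      S = translateScale t ({0,2,4,5,7,8,11} : Finset (ZMod 12))) := by
  have hfilter : Finset.univ.filter (fun S : Finset (ZMod 12) => MaximalNC S ∧ S.card = 7)
      = ((Finset.univ : Finset (ZMod 12)).powersetCard 7).filter MaximalNC' := by
    rw [Finset.powersetCard_eq_filter, Finset.filter_filter, Finset.powerset_univ]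
    apply Finset.filter_congr
    intro S _
    rw [maximalNC_iff]
    tauto
  constructor
  · rw [hfilter, filterEq, cardL48]
  · intro S hS hc
    have hmem : S ∈ Finset.univ.filter (fun S : Finset (ZMod 12) => MaximalNC S ∧ S.card = 7) :=
      Finset.mem_filter.2 ⟨Finset.mem_univ S, hS, hc⟩
    rw [hfilter, filterEq] at hmem
    exact classify48 S hmem
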